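/- arXiv:1710.07017 — 2 statements merged into one kernel-verified Lean document; each statement's English description precedes it below -/
import Mathlib

section
/- Let k₂ < 0 and τ > 0 with τ < π/(2|k₂|). Then the equation s − k₂ e^{−sτ} = 0 has no purely imaginary root s = iω with ω ∈ ℝ. (This is the k₁ = 0 case of the delay bound τ₀ = π/(2|k₂|) in the stability criterion for the neutral delay equation.) -/
theorem stmt8 (k₂ τ : ℝ) (hk₂ : k₂ < 0) (hτ : 0 < τ)
    (hτ₀ : τ < Real.pi / (2 * |k₂|)) :
    ∀ ω : ℝ, (Complex.I * ω) - (k₂ : ℂ) * Complex.exp (-(Complex.I * ω) * τ) ≠ 0 := by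
  intro ω h
  have key : (Complex.I * ω) = (k₂ : ℂ) * Complex.exp (-(Complex.I * ω) * τ) :=
    sub_eq_zero.mp h
  have harg : -(Complex.I * (ω:ℂ)) * τ = ((-(ω*τ) : ℝ) : ℂ) * Complex.I := by
    push_cast; ring
  rw [harg, Complex.exp_mul_I] at key
  have hre := congrArg Complex.re key
  have him := congrArg Complex.im key
  simp [Complex.mul_re, Complex.mul_im, Complex.add_re, Complex.add_im,
    Complex.cos_ofReal_re, Complex.sin_ofReal_re, Complex.cos_ofReal_im,
    Complex.sin_ofReal_im, Real.cos_neg, Real.sin_neg, ← Complex.ofReal_mul] at hre him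
  -- hre : 0 = k₂ * cos(ωτ), him : ω = -(k₂ * sin(ωτ))
  have hcos : Real.cos (ω * τ) = 0 := by
    rcases hre with h1 | h1
    · exact absurd h1 (ne_of_lt hk₂)
    · exact h1
  have hsin : |Real.sin (ω * τ)| = 1 := by
    have := Real.sin_sq_add_cos_sq (ω * τ)
    rw [hcos] at this
    have : Real.sin (ω * τ) ^ 2 = 1 := by nlinarith
    nlinarith [abs_nonneg (Real.sin (ω * τ)), sq_abs (Real.sin (ω * τ))]
  have hω : |ω| = |k₂| := by
    rw [him, abs_neg, abs_mul, hsin, mul_one]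
  have hk₂' : 0 < |k₂| := abs_pos.mpr (ne_of_lt hk₂)
  have hbound : |ω * τ| < Real.pi / 2 := by
    rw [abs_mul, hω, abs_of_pos hτ]
    calc |k₂| * τ < |k₂| * (Real.pi / (2 * |k₂|)) := by
          exact mul_lt_mul_of_pos_left hτ₀ hk₂'
      _ = Real.pi / 2 := by field_simp
  have : 0 < Real.cos (ω * τ) :=
    Real.cos_pos_of_mem_Ioo ⟨neg_lt_of_abs_lt hbound, lt_of_abs_lt hbound⟩
  linarith [this, hcos]
end

section
/- Let τ > 0, c ∈ ℝ with |c| < 1, and let z : [−τ, ∞) → ℝ be continuous and satisfy z(t) = c · z(t − τ) + w(t) for all t ≥ 0, where w : [0,∞) → ℝ is bounded with |w(t)| ≤ W. Then z is bounded: for all t ≥ 0, |z(t)| ≤ sup_{r∈[−τ,0]} |z(r)| + W/(1 − |c|). -/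
theorem stmt13 (τ c W : ℝ) (hτ : 0 < τ) (hc : |c| < 1)
    (z w : ℝ → ℝ) (hzcont : ContinuousOn z (Set.Ici (-τ)))
    (hrec : ∀ t ≥ (0:ℝ), z t = c * z (t - τ) + w t)
    (hw : ∀ t ≥ (0:ℝ), |w t| ≤ W) :
    ∀ t ≥ (0:ℝ), |z t| ≤ sSup ((fun r => |z r|) '' Set.Icc (-τ) 0) + W / (1 - |c|) := by
  set M := sSup ((fun r => |z r|) '' Set.Icc (-τ) 0) with hM
  have hsub : Set.Icc (-τ) (0:ℝ) ⊆ Set.Ici (-τ) := Set.Icc_subset_Ici_self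
  have hcont : ContinuousOn (fun r => |z r|) (Set.Icc (-τ) 0) := (hzcont.mono hsub).abs
  have hbdd : BddAbove ((fun r => |z r|) '' Set.Icc (-τ) 0) :=
    (isCompact_Icc.image_of_continuousOn hcont).bddAbove
  have hMle : ∀ r ∈ Set.Icc (-τ) (0:ℝ), |z r| ≤ M := fun r hr =>
    le_csSup hbdd ⟨r, hr, rfl⟩
  have hM0 : 0 ≤ M := le_trans (abs_nonneg _) (hMle 0 ⟨by linarith, le_refl 0⟩)
  have hW0 : 0 ≤ W := le_trans (abs_nonneg _) (hw 0 le_rfl)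
  have hc0 : 0 ≤ |c| := abs_nonneg c
  have hc1 : 0 < 1 - |c| := by linarith
  set D := W / (1 - |c|) with hD
  have hDW : D * (1 - |c|) = W := div_mul_cancel₀ W (ne_of_gt hc1)
  have hD0 : 0 ≤ D := div_nonneg hW0 (le_of_lt hc1)
  have hstep : ∀ t ≥ (0:ℝ), ∀ B, 0 ≤ B → |z (t - τ)| ≤ B → |z t| ≤ |c| * B + W := by
    intro t ht B hB hzB
    rw [hrec t ht]
    calc |c * z (t - τ) + w t| ≤ |c * z (t - τ)| + |w t| := abs_add_le _ _
      _ = |c| * |z (t - τ)| + |w t| := by rw [abs_mul]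
      _ ≤ |c| * B + W := by
          have := hw t ht
          nlinarith
  have key : ∀ n : ℕ, ∀ t, 0 ≤ t → t ≤ n * τ → |z t| ≤ M + D := by
    intro n
    induction n with
    | zero =>
      intro t ht ht'
      simp only [Nat.cast_zero, zero_mul] at ht'
      have ht0 : t = 0 := le_antisymm ht' ht
      have hmem : t - τ ∈ Set.Icc (-τ) (0:ℝ) := by
        constructor <;> simp [ht0] <;> linarith
      have := hstep t ht M hM0 (hMle _ hmem)
      nlinarith
    | succ n ih =>
      intro t ht ht'
      by_cases h : τ ≤ t
      · have h1 : 0 ≤ t - τ := by linarith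
        have h2 : t - τ ≤ n * τ := by push_cast at ht' ⊢; linarith
        have := hstep t ht (M + D) (by linarith) (ih _ h1 h2)
        nlinarith
      · have hmem : t - τ ∈ Set.Icc (-τ) (0:ℝ) := by
          constructor <;> linarith
        have := hstep t ht M hM0 (hMle _ hmem)
        nlinarith
  intro t ht
  have hn : t ≤ (⌈t / τ⌉₊ : ℝ) * τ := by
    rw [← div_le_iff₀ hτ]
    exact Nat.le_ceil _
  exact key ⌈t / τ⌉₊ t ht hn
end
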